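/- arXiv:2012.10410 — 2 statements merged into one kernel-verified Lean document; each statement's English description precedes it below -/
import Mathlib

section
/- Under the same hypotheses (f : H → H Lipschitz with constant L, bounded by C_f, τL < 1, common initial condition x̄), with T = Nτ, the explicit and implicit Euler sequences satisfy ‖x_N^I − x_N^E‖ ≤ τ e^{τL·N} T L C_f (in particular ‖x_N^I − x_N^E‖ ≤ C τ for a constant C depending only on L, C_f and T). -/
/-!
The implicit and the explicit step from nearby points differ by `τ (f x' - f y)`, where the
implicit update `x'` lies within `τ C_f` of `x`. By the Lipschitz bound this makes the error
grow by at most the factor `1 + τL` plus the local defect `τ² L C_f` per step, and the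
discrete Grönwall inequality turns this into `N τ² L C_f e^{τLN} = τ e^{τLN} T L C_f`.
-/

open Real

theorem norm_implicit_sub_explicit_euler_step_le {E : Type*} [NormedAddCommGroup E]
    [NormedSpace ℝ E] {f : E → E} {L C τ : ℝ} (hL : 0 ≤ L)
    (hf : ∀ x y, ‖f x - f y‖ ≤ L * ‖x - y‖) (hC : ∀ x, ‖f x‖ ≤ C) (hτ : 0 ≤ τ)
    {x y x' : E} (hx' : x' = x + τ • f x') :
    ‖x' - (y + τ • f y)‖ ≤ (1 + τ * L) * ‖x - y‖ + τ ^ 2 * L * C := by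
  have hx'x : ‖x' - x‖ ≤ τ * C := by
    rw [hx', add_sub_cancel_left, norm_smul, norm_of_nonneg hτ]
    exact mul_le_mul_of_nonneg_left (hC x') hτ
  have hfx'y : ‖f x' - f y‖ ≤ L * (τ * C) + L * ‖x - y‖ :=
    calc ‖f x' - f y‖ ≤ ‖f x' - f x‖ + ‖f x - f y‖ := norm_sub_le_norm_sub_add_norm_sub _ _ _
      _ ≤ L * ‖x' - x‖ + L * ‖x - y‖ := add_le_add (hf _ _) (hf _ _)
      _ ≤ L * (τ * C) + L * ‖x - y‖ := by gcongr
  calc ‖x' - (y + τ • f y)‖ = ‖(x - y) + τ • (f x' - f y)‖ := by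
        nth_rewrite 1 [hx']
        rw [smul_sub]
        abel_nf
    _ ≤ ‖x - y‖ + τ * ‖f x' - f y‖ := by
        grw [norm_add_le, norm_smul, norm_of_nonneg hτ]
    _ ≤ ‖x - y‖ + τ * (L * (τ * C) + L * ‖x - y‖) := by gcongr
    _ = (1 + τ * L) * ‖x - y‖ + τ ^ 2 * L * C := by ring

theorem implicit_explicit_euler_global_bound_general
    {H : Type*} [NormedAddCommGroup H] [InnerProductSpace ℝ H]
    (f : H → H) (L Cf : ℝ) (hL : 0 ≤ L)
    (hf : ∀ x y, ‖f x - f y‖ ≤ L * ‖x - y‖)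
    (hbdd : ∀ x, ‖f x‖ ≤ Cf)
    (τ : ℝ) (hτ : 0 < τ)
    (xbar : H) (xE xI : ℕ → H)
    (hE0 : xE 0 = xbar) (hI0 : xI 0 = xbar)
    (hE : ∀ n, xE (n + 1) = xE n + τ • f (xE n))
    (hI : ∀ n, xI (n + 1) = xI n + τ • f (xI (n + 1)))
    (N : ℕ) (T : ℝ) (hT : T = N * τ) :
    ‖xI N - xE N‖ ≤ τ * Real.exp (τ * L * N) * T * L * Cf := by
  have hCf : 0 ≤ Cf := (norm_nonneg _).trans (hbdd xbar)
  have hstep (n : ℕ) : ‖xI (n + 1) - xE (n + 1)‖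
      ≤ (1 + τ * L) * ‖xI n - xE n‖ + τ ^ 2 * L * Cf := by
    rw [hE]
    exact norm_implicit_sub_explicit_euler_step_le hL hf hbdd hτ.le (hI n)
  have hgronwall := discrete_gronwall (u := fun n ↦ ‖xI n - xE n‖) (n₀ := 0)
    (by positivity) (fun n _ ↦ hstep n) (fun _ _ ↦ by positivity) (fun _ _ ↦ by positivity)
    (Nat.zero_le N)
  simp only [hE0, hI0, sub_self, norm_zero, Finset.sum_const, Nat.card_Ico, Nat.sub_zero,
    nsmul_eq_mul, zero_add] at hgronwall
  calc ‖xI N - xE N‖ ≤ N * (τ ^ 2 * L * Cf) * exp (N * (τ * L)) := hgronwall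
    _ = τ * Real.exp (τ * L * N) * T * L * Cf := by rw [hT, mul_comm (N : ℝ) (τ * L)]; ring

/-- Global comparison between explicit and implicit Euler schemes up to time `T = N τ`. -/
theorem implicit_explicit_euler_global_bound
    {H : Type*} [NormedAddCommGroup H] [InnerProductSpace ℝ H] [CompleteSpace H]
    (f : H → H) (L Cf : ℝ) (hL : 0 ≤ L)
    (hf : ∀ x y, ‖f x - f y‖ ≤ L * ‖x - y‖)
    (hbdd : ∀ x, ‖f x‖ ≤ Cf)
    (τ : ℝ) (hτ : 0 < τ) (hτL : τ * L < 1)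
    (xbar : H) (xE xI : ℕ → H)
    (hE0 : xE 0 = xbar) (hI0 : xI 0 = xbar)
    (hE : ∀ n, xE (n + 1) = xE n + τ • f (xE n))
    (hI : ∀ n, xI (n + 1) = xI n + τ • f (xI (n + 1)))
    (N : ℕ) (T : ℝ) (hT : T = N * τ) :
    ‖xI N - xE N‖ ≤ τ * Real.exp (τ * L * N) * T * L * Cf :=
  implicit_explicit_euler_global_bound_general f L Cf hL hf hbdd τ hτ xbar xE xI hE0 hI0 hE hI N T
    hT
end

section
/- Let H be a Hilbert space, E : H → ℝ C¹, and x : [0,T] → H a C¹ curve satisfying for all 0 ≤ a ≤ b ≤ T the integral inequality E(x_b) − E(x_a) + ∫_a^b (½‖x'_t‖² + ½‖∇E(x_t)‖²) dt ≤ 0. Then x'(t) = −∇E(x(t)) for all t ∈ (0,T). -/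
/-!
By the chain rule, `d/dt E(x t) = ⟪∇E(x t), x' t⟫`, so the fundamental theorem of calculus turns
the left-hand side of the energy dissipation inequality into `∫ₐᵇ ½‖x' t + ∇E(x t)‖² dt`.
This continuous, nonnegative integrand has nonpositive integral over every subinterval of
`[0, T]`, hence vanishes on `(0, T)`, which is the gradient flow equation.
-/

open Set InnerProductSpace

theorem Continuous.nonpos_of_forall_intervalIntegral_nonpos {g : ℝ → ℝ} (hg : Continuous g)
    {t T : ℝ} (htT : t < T) (h : ∀ b ∈ Ioc t T, ∫ s in t..b, g s ≤ 0) : g t ≤ 0 := by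
  by_contra! hpos
  obtain ⟨u, htu, hu⟩ :=
    exists_Ico_subset_of_mem_nhds (hg.continuousAt.eventually (lt_mem_nhds hpos)) ⟨T, htT⟩
  have hb : t < min u T := lt_min htu htT
  have hint : 0 < ∫ s in t..min u T, g s :=
    intervalIntegral.intervalIntegral_pos_of_pos_on (hg.intervalIntegrable _ _)
      (fun s hs => hu ⟨hs.1.le, hs.2.trans_le (min_le_left u T)⟩) hb
  exact (h _ ⟨hb, min_le_right u T⟩).not_gt hint

section Gradient

variable {H : Type*} [NormedAddCommGroup H] [InnerProductSpace ℝ H] [CompleteSpace H]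

theorem HasGradientAt.hasDerivAt_comp {f : H → ℝ} {f' x' : H} {x : ℝ → H} {t : ℝ}
    (hf : HasGradientAt f f' (x t)) (hx : HasDerivAt x x' t) :
    HasDerivAt (fun s => f (x s)) ⟪f', x'⟫_ℝ t := by
  have := hf.hasFDerivAt.comp_hasDerivAt t hx
  rwa [toDual_apply_apply] at this

theorem ContDiff.continuous_gradient {f : H → ℝ} (hf : ContDiff ℝ 1 f) :
    Continuous (gradient f) :=
  (toDual ℝ H).symm.continuous.comp (hf.continuous_fderiv one_ne_zero)

theorem sub_add_integral_eq_integral_norm_deriv_add_gradient_sq {E : H → ℝ} (hE : ContDiff ℝ 1 E)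
    {x : ℝ → H} (hx : ContDiff ℝ 1 x) (a b : ℝ) :
    E (x b) - E (x a)
        + ∫ t in a..b, ((1 / 2) * ‖deriv x t‖ ^ 2 + (1 / 2) * ‖gradient E (x t)‖ ^ 2) =
      ∫ t in a..b, (1 / 2) * ‖deriv x t + gradient E (x t)‖ ^ 2 := by
  have hgrad : Continuous fun t => gradient E (x t) := hE.continuous_gradient.comp hx.continuous
  have hderiv : Continuous (deriv x) := hx.continuous_deriv le_rfl
  have hchain : ∀ t, HasDerivAt (fun s => E (x s)) ⟪gradient E (x t), deriv x t⟫_ℝ t := fun t =>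
    ((hE.differentiable one_ne_zero _).hasGradientAt).hasDerivAt_comp
      ((hx.differentiable one_ne_zero t).hasDerivAt)
  have hFTC : ∫ t in a..b, ⟪gradient E (x t), deriv x t⟫_ℝ = E (x b) - E (x a) :=
    intervalIntegral.integral_eq_sub_of_hasDerivAt (fun t _ => hchain t)
      ((hgrad.inner hderiv).intervalIntegrable a b)
  rw [← hFTC, ← intervalIntegral.integral_add ((hgrad.inner hderiv).intervalIntegrable a b)
    ((by fun_prop : Continuous _).intervalIntegrable a b)]
  refine intervalIntegral.integral_congr fun t _ => ?_
  simp only [norm_add_sq_real, real_inner_comm (deriv x t)]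
  ring

end Gradient

/-- EDI characterization of gradient flows: if a `C¹` curve satisfies the integral
energy dissipation inequality then it solves `x' = -∇E(x)` on `(0, T)`. -/
theorem edi_implies_gradient_flow
    {H : Type*} [NormedAddCommGroup H] [InnerProductSpace ℝ H] [CompleteSpace H]
    (E : H → ℝ) (hE : ContDiff ℝ 1 E)
    (T : ℝ) (x : ℝ → H) (hx : ContDiff ℝ 1 x)
    (hEDI : ∀ a b : ℝ, 0 ≤ a → a ≤ b → b ≤ T →
      E (x b) - E (x a)
        + ∫ t in a..b, ((1 / 2) * ‖deriv x t‖ ^ 2 + (1 / 2) * ‖gradient E (x t)‖ ^ 2) ≤ 0) :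
    ∀ t ∈ Set.Ioo 0 T, deriv x t = -gradient E (x t) := by
  intro t ht
  have hdefect_cont : Continuous fun s => (1 / 2 : ℝ) * ‖deriv x s + gradient E (x s)‖ ^ 2 := by
    have := hE.continuous_gradient.comp hx.continuous
    have := hx.continuous_deriv le_rfl
    fun_prop
  have hdefect : (1 / 2 : ℝ) * ‖deriv x t + gradient E (x t)‖ ^ 2 ≤ 0 :=
    hdefect_cont.nonpos_of_forall_intervalIntegral_nonpos ht.2 fun b hb => by
      simpa only [sub_add_integral_eq_integral_norm_deriv_add_gradient_sq hE hx] using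
        hEDI t b ht.1.le hb.1.le hb.2
  have hnorm : ‖deriv x t + gradient E (x t)‖ = 0 := by
    nlinarith [norm_nonneg (deriv x t + gradient E (x t))]
  exact eq_neg_of_add_eq_zero_left (norm_eq_zero.mp hnorm)
end
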